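/- arXiv:0804.0145 — 3 statements merged into one kernel-verified Lean document; each statement's English description precedes it below -/
import Mathlib

section
/- Let F be a p-dimensional real vector space, H₁,...,H_m distinct linear hyperplanes of F, and for each i an increasing integer sequence β⁽ⁱ⁾ with β⁽ⁱ⁾_n = O(n^{α_i}). Let K be an open bounded convex subset of F, and let K_n be obtained from K by removing β⁽ⁱ⁾_n distinct affine translates of each H_i. Then the number c(n) of connected components of K_n satisfies c(n) = O(n^α), where α = Σ_{i∈I} α_i and I ⊆ {1,...,m} is chosen so that ∩_{i∈I} H_i has minimal dimension, I has minimal cardinality among such sets, and α is maximal among such sets. -/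
open Module Pointwise

namespace Stmt1Aux

lemma lt_mid {x y c s : ℝ} (hx : c < x) (hy : c < y) (h0 : 0 ≤ s) (h1 : s ≤ 1) :
    c < (1 - s) * x + s * y := by
  rcases eq_or_lt_of_le h1 with h | h
  · subst h; linarith [show (1 - (1:ℝ)) * x + 1 * y = y by ring]
  · nlinarith [mul_pos (by linarith : (0:ℝ) < 1 - s) (by linarith : (0:ℝ) < x - c),
      mul_nonneg h0 (by linarith : (0:ℝ) ≤ y - c)]

lemma mid_lt {x y c s : ℝ} (hx : x < c) (hy : y < c) (h0 : 0 ≤ s) (h1 : s ≤ 1) :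
    (1 - s) * x + s * y < c := by
  have := lt_mid (x := -x) (y := -y) (c := -c) (by linarith) (by linarith) h0 h1
  linarith

variable {V : Type*} [AddCommGroup V] [Module ℝ V] {ι : Type*} [DecidableEq ι]

/-- The set of sign vectors realized by the arrangement `A` relative to the flat given by
equalities `E`. -/
def Realized (g : ι → V →ₗ[ℝ] ℝ) (t : ι → ℝ) (A E : Finset ι) : Set (ι → Bool) :=
  {σ | (∀ a ∉ A, σ a = false) ∧ ∃ v : V, (∀ e ∈ E, g e v = t e) ∧
    ∀ a ∈ A, if σ a = true then t a < g a v else g a v < t a}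

/-- Subsets of `A` whose corresponding flat (together with `E`) is nonempty. -/
def Feas (g : ι → V →ₗ[ℝ] ℝ) (t : ι → ℝ) (A E : Finset ι) : Set (Finset ι) :=
  {S | S ⊆ A ∧ ∃ v : V, ∀ e ∈ E ∪ S, g e v = t e}

lemma finite_realized (g : ι → V →ₗ[ℝ] ℝ) (t : ι → ℝ) (A E : Finset ι) :
    (Realized g t A E).Finite := by
  classical
  have hsub : Realized g t A E ⊆
      (fun (b : {x // x ∈ A} → Bool) (a : ι) => if h : a ∈ A then b ⟨a, h⟩ else false) ''
        Set.univ := by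
    intro σ hσ
    refine ⟨fun a => σ a.1, trivial, ?_⟩
    funext a
    by_cases h : a ∈ A
    · simp [h]
    · simp [h, hσ.1 a h]
  exact (Set.finite_univ.image _).subset hsub

lemma finite_feas (g : ι → V →ₗ[ℝ] ℝ) (t : ι → ℝ) (A E : Finset ι) :
    (Feas g t A E).Finite := by
  classical
  exact (A.powerset.finite_toSet).subset (fun S hS => by
    simpa [Finset.mem_powerset] using hS.1)

lemma realized_ncard_le (g : ι → V →ₗ[ℝ] ℝ) (t : ι → ℝ) (A : Finset ι) :
    ∀ E : Finset ι, (Realized g t A E).ncard ≤ (Feas g t A E).ncard := by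
  classical
  induction A using Finset.induction_on with
  | empty =>
    intro E
    by_cases hfe : ∃ v : V, ∀ e ∈ E, g e v = t e
    · have h1 : (∅ : Finset ι) ∈ Feas g t ∅ E := by
        refine ⟨Finset.Subset.refl _, ?_⟩
        simpa using hfe
      have hsub : Realized g t ∅ E ⊆ {fun _ => false} := by
        intro σ hσ
        simp only [Set.mem_singleton_iff]
        funext a; exact hσ.1 a (Finset.notMem_empty a)
      calc (Realized g t ∅ E).ncard ≤ ({fun _ => false} : Set (ι → Bool)).ncard :=
            Set.ncard_le_ncard hsub (Set.finite_singleton _)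
        _ = 1 := Set.ncard_singleton _
        _ ≤ (Feas g t ∅ E).ncard := by
            rw [Nat.one_le_iff_ne_zero]
            intro h0
            have := (Set.ncard_pos (finite_feas g t ∅ E)).2 ⟨∅, h1⟩
            omega
    · have hempty : Realized g t ∅ E = ∅ := by
        ext σ
        simp only [Realized, Set.mem_setOf_eq, Set.mem_empty_iff_false, iff_false, not_and]
        rintro - ⟨v, hv, -⟩
        exact hfe ⟨v, hv⟩
      simp [hempty]
  | @insert a s ha ih =>
    intro E
    set u : (ι → Bool) → ι → Bool := fun σ => Function.update σ a false with hu
    set R := Realized g t (insert a s) E with hRdef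
    set Rp := R ∩ {σ | σ a = true} with hRp
    set Rm := R ∩ {σ | σ a = false} with hRm
    have hRfin : R.Finite := finite_realized _ _ _ _
    have hRpfin : Rp.Finite := hRfin.subset Set.inter_subset_left
    have hRmfin : Rm.Finite := hRfin.subset Set.inter_subset_left
    have hsplit : R = Rp ∪ Rm := by
      ext σ
      cases hb : σ a
      · simp [hRp, hRm, hb]
      · simp [hRp, hRm, hb]
    have hdisj : Disjoint Rp Rm := by
      rw [Set.disjoint_left]
      rintro σ ⟨-, h1⟩ ⟨-, h2⟩
      simp only [Set.mem_setOf_eq] at h1 h2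
      rw [h1] at h2; simp at h2
    -- images under u
    have himg : ∀ σ ∈ R, u σ ∈ Realized g t s E := by
      rintro σ ⟨hoff, v, hE, hA⟩
      refine ⟨?_, v, hE, ?_⟩
      · intro b hb
        by_cases hba : b = a
        · subst hba; simp [hu]
        · simp only [hu, Function.update_of_ne hba]
          exact hoff b (by simp [hb, hba])
      · intro b hb
        have hbne : b ≠ a := fun e => ha (e ▸ hb)
        simp only [hu, Function.update_of_ne hbne]
        exact hA b (Finset.mem_insert_of_mem hb)
    have hinjp : Set.InjOn u Rp := by
      rintro σ ⟨-, h1⟩ τ ⟨-, h2⟩ hst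
      simp only [Set.mem_setOf_eq] at h1 h2
      funext b
      by_cases hba : b = a
      · subst hba; rw [h1, h2]
      · have := congrFun hst b
        simp only [hu, Function.update_of_ne hba] at this
        exact this
    have hinjm : Set.InjOn u Rm := by
      rintro σ ⟨-, h1⟩ τ ⟨-, h2⟩ hst
      simp only [Set.mem_setOf_eq] at h1 h2
      funext b
      by_cases hba : b = a
      · subst hba; rw [h1, h2]
      · have := congrFun hst b
        simp only [hu, Function.update_of_ne hba] at this
        exact this
    -- the intersection of the two images lands in the induced arrangement
    have hinter : (u '' Rp) ∩ (u '' Rm) ⊆ Realized g t s (insert a E) := by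
      rintro σ' ⟨⟨σ₁, ⟨⟨hoff₁, v₁, hE₁, hA₁⟩, hs₁⟩, rfl⟩, σ₂, ⟨⟨hoff₂, v₂, hE₂, hA₂⟩, hs₂⟩, hu2⟩
      simp only [Set.mem_setOf_eq] at hs₁ hs₂
      have hv₁a : t a < g a v₁ := by
        have := hA₁ a (Finset.mem_insert_self a s)
        rwa [if_pos hs₁] at this
      have hv₂a : g a v₂ < t a := by
        have := hA₂ a (Finset.mem_insert_self a s)
        rwa [if_neg (by simp [hs₂])] at this
      have hd : (0:ℝ) < g a v₁ - g a v₂ := by linarith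
      set s₀ : ℝ := (t a - g a v₂) / (g a v₁ - g a v₂) with hs₀
      have hs₀0 : 0 ≤ s₀ := div_nonneg (by linarith) hd.le
      have hs₀1 : s₀ ≤ 1 := by
        rw [div_le_one hd]; linarith
      have hmul : s₀ * (g a v₁ - g a v₂) = t a - g a v₂ :=
        div_mul_cancel₀ _ (ne_of_gt hd)
      set w : V := v₂ + s₀ • (v₁ - v₂) with hw
      have hval : ∀ e : ι, g e w = (1 - s₀) * g e v₂ + s₀ * g e v₁ := by
        intro e
        rw [hw]
        simp only [map_add, map_smul, map_sub, smul_eq_mul]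
        ring
      have hagree : ∀ b, b ≠ a → σ₁ b = σ₂ b := by
        intro b hba
        have := congrFun hu2 b
        simp only [hu, Function.update_of_ne hba] at this
        exact this.symm
      refine ⟨?_, w, ?_, ?_⟩
      · intro b hb
        by_cases hba : b = a
        · subst hba; simp [hu]
        · simp only [hu, Function.update_of_ne hba]
          exact hoff₁ b (by simp [hb, hba])
      · intro e he
        rcases Finset.mem_insert.1 he with rfl | he'
        · rw [hval e]
          linear_combination hmul
        · rw [hval e, hE₁ e he', hE₂ e he']; ring
      · intro b hb
        have hbne : b ≠ a := fun e => ha (e ▸ hb)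
        have h1 := hA₁ b (Finset.mem_insert_of_mem hb)
        have h2 := hA₂ b (Finset.mem_insert_of_mem hb)
        simp only [hu, Function.update_of_ne hbne]
        rw [← hagree b hbne] at h2
        by_cases hσb : σ₁ b = true
        · rw [if_pos hσb] at h1 h2 ⊢
          rw [hval b]
          exact lt_mid h2 h1 hs₀0 hs₀1
        · rw [if_neg hσb] at h1 h2 ⊢
          rw [hval b]
          exact mid_lt h2 h1 hs₀0 hs₀1
    -- counting
    have hcount : R.ncard ≤ (Realized g t s E).ncard + (Realized g t s (insert a E)).ncard := by
      have h1 : R.ncard = Rp.ncard + Rm.ncard := by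
        rw [hsplit]; exact Set.ncard_union_eq hdisj hRpfin hRmfin
      have h2 : Rp.ncard = (u '' Rp).ncard := (Set.ncard_image_of_injOn hinjp).symm
      have h3 : Rm.ncard = (u '' Rm).ncard := (Set.ncard_image_of_injOn hinjm).symm
      have h4 : ((u '' Rp) ∪ (u '' Rm)).ncard + ((u '' Rp) ∩ (u '' Rm)).ncard
          = (u '' Rp).ncard + (u '' Rm).ncard :=
        Set.ncard_union_add_ncard_inter _ _ (hRpfin.image u) (hRmfin.image u)
      have h5 : ((u '' Rp) ∪ (u '' Rm)).ncard ≤ (Realized g t s E).ncard := by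
        apply Set.ncard_le_ncard _ (finite_realized _ _ _ _)
        rintro σ' (⟨σ, hσ, rfl⟩ | ⟨σ, hσ, rfl⟩)
        · exact himg σ hσ.1
        · exact himg σ hσ.1
      have h6 : ((u '' Rp) ∩ (u '' Rm)).ncard ≤ (Realized g t s (insert a E)).ncard :=
        Set.ncard_le_ncard hinter (finite_realized _ _ _ _)
      omega
    -- feasibility counting
    have hfeas : (Feas g t s E).ncard + (Feas g t s (insert a E)).ncard
        ≤ (Feas g t (insert a s) E).ncard := by
      set F₁ := Feas g t s E with hF₁
      set F₂ := (insert a) '' Feas g t s (insert a E) with hF₂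
      have hsub₁ : F₁ ⊆ Feas g t (insert a s) E := by
        rintro S ⟨hSA, v, hv⟩
        exact ⟨hSA.trans (Finset.subset_insert a s), v, hv⟩
      have hsub₂ : F₂ ⊆ Feas g t (insert a s) E := by
        rintro S' ⟨S, ⟨hSA, v, hv⟩, rfl⟩
        refine ⟨Finset.insert_subset_insert a hSA, v, ?_⟩
        intro e he
        apply hv
        rcases Finset.mem_union.1 he with he' | he'
        · exact Finset.mem_union_left _ (Finset.mem_insert_of_mem he')
        · rcases Finset.mem_insert.1 he' with rfl | he''
          · exact Finset.mem_union_left _ (Finset.mem_insert_self _ _)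
          · exact Finset.mem_union_right _ he''
      have hdisjF : Disjoint F₁ F₂ := by
        rw [Set.disjoint_left]
        rintro S ⟨hSA, -⟩ ⟨T, ⟨hTA, -⟩, rfl⟩
        exact ha (hSA (Finset.mem_insert_self a T))
      have hinjF : Set.InjOn (insert a) (Feas g t s (insert a E)) := by
        rintro S ⟨hSA, -⟩ T ⟨hTA, -⟩ hST
        have haS : a ∉ S := fun h => ha (hSA h)
        have haT : a ∉ T := fun h => ha (hTA h)
        rw [← Finset.erase_insert haS, ← Finset.erase_insert haT, hST]
      have hfin₁ : F₁.Finite := finite_feas _ _ _ _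
      have hfin₂ : F₂.Finite := (finite_feas g t s (insert a E)).image _
      have h1 : (F₁ ∪ F₂).ncard = F₁.ncard + F₂.ncard :=
        Set.ncard_union_eq hdisjF hfin₁ hfin₂
      have h2 : F₂.ncard = (Feas g t s (insert a E)).ncard :=
        Set.ncard_image_of_injOn hinjF
      have h3 : (F₁ ∪ F₂).ncard ≤ (Feas g t (insert a s) E).ncard :=
        Set.ncard_le_ncard (Set.union_subset hsub₁ hsub₂) (finite_feas _ _ _ _)
      omega
    calc R.ncard ≤ (Realized g t s E).ncard + (Realized g t s (insert a E)).ncard := hcount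
      _ ≤ (Feas g t s E).ncard + (Feas g t s (insert a E)).ncard :=
          Nat.add_le_add (ih E) (ih (insert a E))
      _ ≤ (Feas g t (insert a s) E).ncard := hfeas


variable {F : Type*} [NormedAddCommGroup F] [NormedSpace ℝ F] [FiniteDimensional ℝ F]

lemma cut {p : ℕ} (hdim : finrank ℝ F = p) (hp : 1 ≤ p) {Hi : Submodule ℝ F}
    (hH : finrank ℝ Hi = p - 1) (A : Submodule ℝ F) :
    finrank ℝ A ≤ finrank ℝ (A ⊓ Hi : Submodule ℝ F) + 1 := by
  have h1 := Submodule.finrank_sup_add_finrank_inf_eq A Hi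
  have h2 : finrank ℝ (A ⊔ Hi : Submodule ℝ F) ≤ p := hdim ▸ Submodule.finrank_le _
  omega

variable {m : ℕ} {H : Fin m → Submodule ℝ F}

lemma inf_empty_eq_top : (⨅ i ∈ (∅ : Finset (Fin m)), H i) = ⊤ := by simp

lemma ge_aux {p : ℕ} (hdim : finrank ℝ F = p) (hp : 1 ≤ p)
    (hhyp : ∀ i, finrank ℝ (H i) = p - 1) (J : Finset (Fin m)) :
    p ≤ J.card + finrank ℝ (⨅ i ∈ J, H i : Submodule ℝ F) := by
  classical
  induction J using Finset.induction_on with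
  | empty =>
    rw [inf_empty_eq_top]
    simp [finrank_top, hdim]
  | @insert a s ha ih =>
    rw [Finset.iInf_insert]
    have hc := cut hdim hp (hhyp a) (⨅ i ∈ s, H i)
    rw [Finset.card_insert_of_notMem ha]
    rw [inf_comm] at hc
    omega

lemma ex_aux {p : ℕ} (hdim : finrank ℝ F = p) (hp : 1 ≤ p)
    (hhyp : ∀ i, finrank ℝ (H i) = p - 1) (J : Finset (Fin m)) :
    ∃ J' ⊆ J, (⨅ i ∈ J', H i) = (⨅ i ∈ J, H i) ∧
      J'.card + finrank ℝ (⨅ i ∈ J, H i : Submodule ℝ F) = p := by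
  classical
  induction J using Finset.strongInductionOn with
  | _ J ih =>
  rcases J.eq_empty_or_nonempty with rfl | ⟨i, hi⟩
  · refine ⟨∅, Finset.Subset.refl _, rfl, ?_⟩
    rw [inf_empty_eq_top]
    simp [finrank_top, hdim]
  · set E := J.erase i with hE
    obtain ⟨J', hJ'E, hinfJ', hcardJ'⟩ := ih E (Finset.erase_ssubset hi)
    have hJE : J = insert i E := (Finset.insert_erase hi).symm
    have h3 : (⨅ j ∈ J, H j) = H i ⊓ ⨅ j ∈ E, H j := by
      rw [hJE, Finset.iInf_insert]
    by_cases hc : (⨅ j ∈ J, H j) = ⨅ j ∈ E, H j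
    · exact ⟨J', hJ'E.trans (Finset.erase_subset i J), by rw [hinfJ', hc], by rw [hc]; exact hcardJ'⟩
    · have hle : (⨅ j ∈ J, H j) ≤ ⨅ j ∈ E, H j := by rw [h3]; exact inf_le_right
      have hlt : (⨅ j ∈ J, H j) < ⨅ j ∈ E, H j := hle.lt_of_ne hc
      have h1 : finrank ℝ (⨅ j ∈ J, H j : Submodule ℝ F) <
          finrank ℝ (⨅ j ∈ E, H j : Submodule ℝ F) :=
        Submodule.finrank_lt_finrank_of_lt hlt
      have h2 := cut hdim hp (hhyp i) (⨅ j ∈ E, H j)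
      rw [inf_comm, ← h3] at h2
      have hiJ' : i ∉ J' := fun h => (Finset.notMem_erase i J) (hJ'E h)
      refine ⟨insert i J', ?_, ?_, ?_⟩
      · intro x hx
        rcases Finset.mem_insert.1 hx with rfl | hx'
        · exact hi
        · exact (Finset.erase_subset i J) (hJ'E hx')
      · rw [Finset.iInf_insert, hinfJ', ← h3]
      · rw [Finset.card_insert_of_notMem hiJ']
        omega

lemma ext_aux {p : ℕ} (hdim : finrank ℝ F = p) (hp : 1 ≤ p)
    (hhyp : ∀ i, finrank ℝ (H i) = p - 1) :
    ∀ (k : ℕ) (J : Finset (Fin m)),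
      J.card + finrank ℝ (⨅ i ∈ J, H i : Submodule ℝ F) = p →
      finrank ℝ (⨅ i ∈ J, H i : Submodule ℝ F) = k →
      ∃ J'', J ⊆ J'' ∧ J''.card + finrank ℝ (⨅ i ∈ J'', H i : Submodule ℝ F) = p ∧
        finrank ℝ (⨅ i ∈ J'', H i : Submodule ℝ F) =
          finrank ℝ (⨅ i ∈ (Finset.univ : Finset (Fin m)), H i : Submodule ℝ F) := by
  classical
  intro k
  induction k using Nat.strong_induction_on with
  | _ k ih =>
  intro J hcard hk
  set dmin := finrank ℝ (⨅ i ∈ (Finset.univ : Finset (Fin m)), H i : Submodule ℝ F) with hdmin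
  have hmono : (⨅ i ∈ (Finset.univ : Finset (Fin m)), H i) ≤ ⨅ i ∈ J, H i :=
    biInf_mono (fun i _ => Finset.mem_univ i)
  have hdk : dmin ≤ k := hk ▸ Submodule.finrank_mono hmono
  rcases eq_or_lt_of_le hdk with heq | hlt
  · exact ⟨J, Finset.Subset.refl _, hcard, by rw [hk, ← heq]⟩
  · have hex : ∃ i, ¬ ((⨅ j ∈ J, H j) ≤ H i) := by
      by_contra hcon
      push_neg at hcon
      have : (⨅ j ∈ J, H j) ≤ ⨅ i ∈ (Finset.univ : Finset (Fin m)), H i :=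
        le_iInf₂ fun i _ => hcon i
      have := Submodule.finrank_mono this
      omega
    obtain ⟨i, hi⟩ := hex
    have hiJ : i ∉ J := fun h => hi (iInf₂_le i h)
    have h3 : (⨅ j ∈ insert i J, H j) = H i ⊓ ⨅ j ∈ J, H j := Finset.iInf_insert _ _ _
    have hlt2 : (⨅ j ∈ insert i J, H j) < ⨅ j ∈ J, H j := by
      rw [h3]
      refine lt_of_le_of_ne inf_le_right fun he => hi ?_
      rw [← he]
      exact inf_le_left
    have h1 : finrank ℝ (⨅ j ∈ insert i J, H j : Submodule ℝ F) <
        finrank ℝ (⨅ j ∈ J, H j : Submodule ℝ F) := Submodule.finrank_lt_finrank_of_lt hlt2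
    have h2 := cut hdim hp (hhyp i) (⨅ j ∈ J, H j)
    rw [inf_comm, ← h3] at h2
    have hcard' : (insert i J).card + finrank ℝ (⨅ j ∈ insert i J, H j : Submodule ℝ F) = p := by
      rw [Finset.card_insert_of_notMem hiJ]
      omega
    obtain ⟨J'', hsub, hc, hd⟩ := ih (finrank ℝ (⨅ j ∈ insert i J, H j : Submodule ℝ F))
      (by omega) (insert i J) hcard' rfl
    exact ⟨J'', (Finset.subset_insert i J).trans hsub, hc, hd⟩

end Stmt1Aux

/-- Counting connected components of an open bounded convex set cut by translates of
finitely many linear hyperplanes: if `β⁽ⁱ⁾_n = O(n^{α_i})` translates of `H_i` are removed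
at stage `n`, the number of connected components is `O(n^α)` with
`α = ∑_{i ∈ I} α_i` for the distinguished set of indices `I`. -/
theorem stmt1 (F : Type*) [NormedAddCommGroup F] [NormedSpace ℝ F]
    [FiniteDimensional ℝ F] (p : ℕ) (hdim : Module.finrank ℝ F = p)
    (m : ℕ) (H : Fin m → Submodule ℝ F)
    (hhyp : ∀ i, Module.finrank ℝ (H i) = p - 1)
    (hdist : Function.Injective H)
    (α : Fin m → ℕ) (β : Fin m → ℕ → ℕ)
    (hβmono : ∀ i, Monotone (β i))
    (hβO : ∀ i, ∃ C : ℕ, 0 < C ∧ ∀ n ≥ 1, β i n ≤ C * n ^ (α i))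
    (K : Set F) (hKopen : IsOpen K) (hKbdd : Bornology.IsBounded K)
    (hKconv : Convex ℝ K)
    -- the translates removed at stage `n`: `X i n` is a finite set of
    -- `β i n` translation vectors for the hyperplane `H i`, increasing in `n`
    (X : Fin m → ℕ → Finset F)
    (hXcard : ∀ i n, (X i n).card = β i n)
    (hXmono : ∀ i, Monotone fun n => (X i n : Set F))
    (hXdist : ∀ i n, ∀ x ∈ X i n, ∀ y ∈ X i n, x ≠ y →
      (x +ᵥ (H i : Set F)) ≠ (y +ᵥ (H i : Set F)))
    (Kseq : ℕ → Set F)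
    (hK0 : Kseq 0 = K)
    (hKn : ∀ n, Kseq n = K \ ⋃ i, ⋃ x ∈ X i n, (x +ᵥ (H i : Set F)))
    -- the distinguished index set `I`
    (I : Finset (Fin m))
    (hImin : ∀ J : Finset (Fin m),
      Module.finrank ℝ (⨅ i ∈ I, H i : Submodule ℝ F) ≤
        Module.finrank ℝ (⨅ i ∈ J, H i : Submodule ℝ F))
    (hIcard : ∀ J : Finset (Fin m),
      Module.finrank ℝ (⨅ i ∈ J, H i : Submodule ℝ F) =
        Module.finrank ℝ (⨅ i ∈ I, H i : Submodule ℝ F) → I.card ≤ J.card)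
    (hImax : ∀ J : Finset (Fin m),
      Module.finrank ℝ (⨅ i ∈ J, H i : Submodule ℝ F) =
        Module.finrank ℝ (⨅ i ∈ I, H i : Submodule ℝ F) → J.card = I.card →
        ∑ i ∈ J, α i ≤ ∑ i ∈ I, α i) :
    ∃ C : ℕ, 0 < C ∧ ∀ n ≥ 1,
      Nat.card (ConnectedComponents ↥(Kseq n)) ≤ C * n ^ (∑ i ∈ I, α i) := by
  classical
  rcases Nat.eq_zero_or_pos p with hp0 | hp
  · -- trivial case: `F` is a point
    refine ⟨1, one_pos, fun n hn => ?_⟩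
    haveI hFsub : Subsingleton F := finrank_zero_iff.mp (by rw [hdim, hp0])
    haveI : Subsingleton ↥(Kseq n) := ⟨fun a b => Subtype.ext (Subsingleton.elim _ _)⟩
    haveI : Subsingleton (ConnectedComponents ↥(Kseq n)) := by
      constructor
      intro a b
      obtain ⟨x, rfl⟩ := ConnectedComponents.surjective_coe a
      obtain ⟨y, rfl⟩ := ConnectedComponents.surjective_coe b
      rw [Subsingleton.elim x y]
    have h1 : Nat.card (ConnectedComponents ↥(Kseq n)) ≤ 1 := by
      rcases isEmpty_or_nonempty (ConnectedComponents ↥(Kseq n)) with h | h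
      · rw [Nat.card_of_isEmpty]; omega
      · rw [Nat.card_unique]
    have h2 : 1 ≤ n ^ (∑ i ∈ I, α i) := Nat.one_le_pow _ _ (by omega)
    calc Nat.card (ConnectedComponents ↥(Kseq n)) ≤ 1 := h1
      _ ≤ 1 * n ^ (∑ i ∈ I, α i) := by omega
  -- main case: `p ≥ 1`
  -- construct defining functionals for the hyperplanes
  have hf : ∀ i, ∃ f : F →ₗ[ℝ] ℝ, LinearMap.ker f = H i := by
    intro i
    have hq : finrank ℝ (F ⧸ H i) = 1 := by
      have h := Submodule.finrank_quotient_add_finrank (H i)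
      rw [hdim, hhyp i] at h
      omega
    have e : (F ⧸ H i) ≃ₗ[ℝ] ℝ := LinearEquiv.ofFinrankEq _ _ (by rw [hq, finrank_self])
    refine ⟨e.toLinearMap ∘ₗ (H i).mkQ, ?_⟩
    have hke : LinearMap.ker e.toLinearMap = ⊥ :=
      LinearMap.ker_eq_bot_of_injective e.injective
    rw [LinearMap.ker_comp, hke, Submodule.comap_bot, Submodule.ker_mkQ]
  choose f hker using hf
  have htrans : ∀ (i : Fin m) (x w : F), w ∈ x +ᵥ (H i : Set F) ↔ f i w = f i x := by
    intro i x w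
    rw [Set.mem_vadd_set_iff_neg_vadd_mem]
    have hx : (-x +ᵥ w) = w - x := by rw [vadd_eq_add, neg_add_eq_sub]
    rw [hx, SetLike.mem_coe, ← hker i, LinearMap.mem_ker, map_sub, sub_eq_zero]
  have htrEq : ∀ (j : Fin m) (x y : F), f j x = f j y →
      (x +ᵥ (H j : Set F)) = (y +ᵥ (H j : Set F)) := by
    intro j x y hxy
    ext w
    rw [htrans, htrans, hxy]
  -- the key exponent comparison
  have hcmp : ∀ J' : Finset (Fin m),
      J'.card + finrank ℝ (⨅ i ∈ J', H i : Submodule ℝ F) = p →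
      ∑ i ∈ J', α i ≤ ∑ i ∈ I, α i := by
    intro J' hcard
    obtain ⟨J'', hsub, hc, hd⟩ := Stmt1Aux.ext_aux hdim hp hhyp _ J' hcard rfl
    have hId : finrank ℝ (⨅ i ∈ I, H i : Submodule ℝ F) =
        finrank ℝ (⨅ i ∈ (Finset.univ : Finset (Fin m)), H i : Submodule ℝ F) := by
      refine le_antisymm (hImin Finset.univ)
        (Submodule.finrank_mono (biInf_mono fun i _ => Finset.mem_univ i))
    have h1 : finrank ℝ (⨅ i ∈ J'', H i : Submodule ℝ F) =
        finrank ℝ (⨅ i ∈ I, H i : Submodule ℝ F) := by rw [hd, hId]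
    have h2 : I.card ≤ J''.card := hIcard J'' h1
    have h3 : p ≤ I.card + finrank ℝ (⨅ i ∈ I, H i : Submodule ℝ F) :=
      Stmt1Aux.ge_aux hdim hp hhyp I
    have h4 : J''.card + finrank ℝ (⨅ i ∈ I, H i : Submodule ℝ F) = p := by
      rw [← h1]; exact hc
    have h5 : J''.card = I.card := by omega
    have h6 := hImax J'' h1 h5
    exact le_trans (Finset.sum_le_sum_of_subset hsub) h6
  -- constants
  choose Cb hCpos hCle using hβO
  refine ⟨2 ^ m * ∏ j, Cb j, Nat.mul_pos (pow_pos (by norm_num) m) (Finset.prod_pos fun j _ => hCpos j), ?_⟩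
  intro n hn
  -- walls of the arrangement at stage n
  set gl : Fin m × F → F →ₗ[ℝ] ℝ := fun a => f a.1 with hgl
  set tl : Fin m × F → ℝ := fun a => f a.1 a.2 with htl
  set A : Finset (Fin m × F) :=
    Finset.univ.biUnion (fun i => (X i n).image fun x => (i, x)) with hA
  have hmemA : ∀ a : Fin m × F, a ∈ A ↔ a.2 ∈ X a.1 n := by
    rintro ⟨i, x⟩
    simp only [hA, Finset.mem_biUnion, Finset.mem_univ, true_and, Finset.mem_image,
      Prod.mk.injEq]
    constructor
    · rintro ⟨j, y, hy, rfl, rfl⟩; exact hy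
    · intro hx; exact ⟨i, x, hx, rfl, rfl⟩
  have hKseqK : Kseq n ⊆ K := by rw [hKn n]; exact Set.diff_subset
  have hKsub : ∀ v ∈ Kseq n, ∀ a ∈ A, gl a v ≠ tl a := by
    intro v hv a ha heq
    rw [hKn n] at hv
    refine hv.2 ?_
    refine Set.mem_iUnion.2 ⟨a.1, Set.mem_iUnion₂.2 ⟨a.2, (hmemA a).1 ha, ?_⟩⟩
    exact (htrans a.1 a.2 v).2 heq
  set pat : F → (Fin m × F → Bool) :=
    fun v a => if a ∈ A then decide (tl a < gl a v) else false with hpat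
  have hpatmem : ∀ v ∈ Kseq n, pat v ∈ Stmt1Aux.Realized gl tl A ∅ := by
    intro v hv
    refine ⟨fun a ha => by simp [hpat, ha], v, by simp, fun a ha => ?_⟩
    have hne := hKsub v hv a ha
    by_cases hlt : tl a < gl a v
    · simp [hpat, ha, hlt]
    · have hlt2 : gl a v < tl a := lt_of_le_of_ne (not_lt.1 hlt) hne
      simp [hpat, ha, hlt, hlt2]
  set cell : (Fin m × F → Bool) → Set F := fun σ =>
    K ∩ ⋂ a ∈ A, {v : F | if σ a = true then tl a < gl a v else gl a v < tl a} with hcell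
  have hcellconv : ∀ σ, Convex ℝ (cell σ) := by
    intro σ
    refine hKconv.inter (convex_iInter₂ fun a ha => ?_)
    by_cases hσ : σ a = true
    · simp only [if_pos hσ]
      exact convex_halfSpace_gt (LinearMap.isLinear (gl a)) (tl a)
    · simp only [if_neg hσ]
      exact convex_halfSpace_lt (LinearMap.isLinear (gl a)) (tl a)
  have hcellsub : ∀ σ, cell σ ⊆ Kseq n := by
    intro σ v hv
    rw [hKn n]
    refine ⟨hv.1, fun hmem => ?_⟩
    rw [Set.mem_iUnion] at hmem
    obtain ⟨i, hmem⟩ := hmem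
    rw [Set.mem_iUnion₂] at hmem
    obtain ⟨x, hx, hvx⟩ := hmem
    have ha : (i, x) ∈ A := (hmemA (i, x)).2 hx
    have hcond := Set.mem_iInter₂.1 hv.2 (i, x) ha
    simp only [Set.mem_setOf_eq] at hcond
    have heq : f i v = f i x := (htrans i x v).1 hvx
    by_cases hσ : σ (i, x) = true
    · rw [if_pos hσ] at hcond; exact hcond.ne' heq
    · rw [if_neg hσ] at hcond; exact hcond.ne heq
  have hmemcell : ∀ v ∈ Kseq n, v ∈ cell (pat v) := by
    intro v hv
    refine ⟨hKseqK hv, Set.mem_iInter₂.2 fun a ha => ?_⟩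
    simp only [Set.mem_setOf_eq]
    have hne := hKsub v hv a ha
    by_cases hlt : tl a < gl a v
    · simp [hpat, ha, hlt]
    · have hlt2 : gl a v < tl a := lt_of_le_of_ne (not_lt.1 hlt) hne
      simp [hpat, ha, hlt, hlt2]
  -- Step 1 : components inject into realized sign vectors
  have hrfin : (Stmt1Aux.Realized gl tl A ∅).Finite := Stmt1Aux.finite_realized gl tl A ∅
  haveI := hrfin.to_subtype
  have hsurj : Function.Surjective
      (ConnectedComponents.mk : ↥(Kseq n) → ConnectedComponents ↥(Kseq n)) :=
    ConnectedComponents.surjective_coe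
  set rep := Function.surjInv hsurj with hrep
  have hstep1 : Nat.card (ConnectedComponents ↥(Kseq n)) ≤
      (Stmt1Aux.Realized gl tl A ∅).ncard := by
    rw [← Nat.card_coe_set_eq]
    refine Nat.card_le_card_of_injective
      (fun c => (⟨pat ((rep c : ↥(Kseq n)) : F), hpatmem _ (rep c).2⟩ :
        ↥(Stmt1Aux.Realized gl tl A ∅))) ?_
    intro c₁ c₂ hcc
    have hpp : pat ((rep c₁ : ↥(Kseq n)) : F) = pat ((rep c₂ : ↥(Kseq n)) : F) :=
      congrArg Subtype.val hcc
    have h1 : ((rep c₁ : ↥(Kseq n)) : F) ∈ cell (pat ((rep c₁ : ↥(Kseq n)) : F)) := hmemcell _ (rep c₁).2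
    have h2 : ((rep c₂ : ↥(Kseq n)) : F) ∈ cell (pat ((rep c₁ : ↥(Kseq n)) : F)) := by
      rw [hpp]; exact hmemcell _ (rep c₂).2
    have hpre : IsPreconnected ((Subtype.val ⁻¹' (cell (pat ((rep c₁ : ↥(Kseq n)) : F)))) : Set ↥(Kseq n)) := by
      rw [← Topology.IsInducing.subtypeVal.isPreconnected_image]
      have himg : Subtype.val '' ((Subtype.val ⁻¹' (cell (pat ((rep c₁ : ↥(Kseq n)) : F)))) : Set ↥(Kseq n)) = cell (pat ((rep c₁ : ↥(Kseq n)) : F)) := by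
        rw [Set.image_preimage_eq_inter_range, Subtype.range_coe]
        exact Set.inter_eq_self_of_subset_left (hcellsub _)
      rw [himg]
      exact (hcellconv _).isPreconnected
    have hcc2 : rep c₂ ∈ connectedComponent (rep c₁) :=
      hpre.subset_connectedComponent h1 h2
    have hmk : ConnectedComponents.mk (rep c₂) = ConnectedComponents.mk (rep c₁) :=
      ConnectedComponents.coe_eq_coe'.2 hcc2
    calc c₁ = ConnectedComponents.mk (rep c₁) := (Function.surjInv_eq hsurj c₁).symm
      _ = ConnectedComponents.mk (rep c₂) := hmk.symm
      _ = c₂ := Function.surjInv_eq hsurj c₂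
  -- Step 2 : realized sign vectors are bounded by feasible subsets
  have hstep2 := Stmt1Aux.realized_ncard_le gl tl A ∅
  -- Step 3 : feasible subsets inject into (independent set, walls) data
  choose maxI hmaxsub hmaxinf hmaxcard using Stmt1Aux.ex_aux hdim hp hhyp (H := H)
  set wall : Finset (Fin m × F) → Fin m → F :=
    fun S j => if h : ∃ x, (j, x) ∈ S then h.choose else 0 with hwalldef
  have hwall : ∀ (S : Finset (Fin m × F)) (j : Fin m) (h : ∃ x, (j, x) ∈ S),
      (j, wall S j) ∈ S := by
    intro S j h
    rw [hwalldef]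
    simp only [dif_pos h]
    exact h.choose_spec
  have hex2 : ∀ (S : Finset (Fin m × F)) (j : Fin m),
      j ∈ S.image Prod.fst → ∃ x, (j, x) ∈ S := by
    intro S j hj
    obtain ⟨a, ha, hfst⟩ := Finset.mem_image.1 hj
    exact ⟨a.2, by rw [← hfst]; simpa using ha⟩
  set Φf : Finset (Fin m × F) → (Σ J : Finset (Fin m), ∀ j ∈ maxI J, F) :=
    fun S => ⟨S.image Prod.fst, fun j _ => wall S j⟩ with hΦf
  set T := (Finset.univ.powerset : Finset (Finset (Fin m))).sigma
    (fun J => (maxI J).pi (fun j => X j n)) with hT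
  have hkey : ∀ S₁ S₂ : Finset (Fin m × F),
      S₁ ∈ Stmt1Aux.Feas gl tl A ∅ → S₂ ∈ Stmt1Aux.Feas gl tl A ∅ →
      S₁.image Prod.fst = S₂.image Prod.fst →
      (∀ j ∈ maxI (S₁.image Prod.fst), wall S₁ j = wall S₂ j) → S₁ ⊆ S₂ := by
    rintro S₁ S₂ ⟨hS₁A, v₁, hv₁⟩ ⟨hS₂A, v₂, hv₂⟩ hJ hw a haS₁
    obtain ⟨i, x⟩ := a
    have hv₁' : ∀ e ∈ S₁, f e.1 v₁ = f e.1 e.2 := fun e he => hv₁ e (by simp [he])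
    have hv₂' : ∀ e ∈ S₂, f e.1 v₂ = f e.1 e.2 := fun e he => hv₂ e (by simp [he])
    have hiJ : i ∈ S₁.image Prod.fst := Finset.mem_image.2 ⟨(i, x), haS₁, rfl⟩
    have hdiff : v₁ - v₂ ∈ (⨅ j ∈ S₁.image Prod.fst, H j : Submodule ℝ F) := by
      rw [← hmaxinf (S₁.image Prod.fst)]
      simp only [Submodule.mem_iInf]
      intro j hj
      have h₁ : (j, wall S₁ j) ∈ S₁ := hwall S₁ j (hex2 S₁ j (hmaxsub _ hj))
      have h₂ : (j, wall S₂ j) ∈ S₂ := hwall S₂ j (hex2 S₂ j (hmaxsub _ (hJ ▸ hj)))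
      have e₁ : f j v₁ = f j (wall S₁ j) := hv₁' (j, wall S₁ j) h₁
      have e₂ : f j v₂ = f j (wall S₂ j) := hv₂' (j, wall S₂ j) h₂
      rw [← hker j, LinearMap.mem_ker, map_sub, sub_eq_zero, e₁, e₂, hw j hj]
    have hfi : f i v₁ = f i v₂ := by
      have hmem : v₁ - v₂ ∈ H i := (iInf₂_le i hiJ : _ ≤ H i) hdiff
      rw [← hker i, LinearMap.mem_ker, map_sub, sub_eq_zero] at hmem
      exact hmem
    obtain ⟨x₂, hx₂⟩ : ∃ y, (i, y) ∈ S₂ := hex2 S₂ i (hJ ▸ hiJ)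
    have hxx : f i x = f i x₂ := by
      have e1 : f i v₁ = f i x := hv₁' (i, x) haS₁
      have e2 : f i v₂ = f i x₂ := hv₂' (i, x₂) hx₂
      rw [← e1, ← e2, hfi]
    have hxX : x ∈ X i n := (hmemA (i, x)).1 (hS₁A haS₁)
    have hx₂X : x₂ ∈ X i n := (hmemA (i, x₂)).1 (hS₂A hx₂)
    have hxeq : x = x₂ := by
      by_contra hne
      exact hXdist i n x hxX x₂ hx₂X hne (htrEq i x x₂ hxx)
    rw [hxeq]; exact hx₂
  have hstep3 : (Stmt1Aux.Feas gl tl A ∅).ncard ≤ T.card := by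
    rw [← Set.ncard_coe_finset T]
    refine Set.ncard_le_ncard_of_injOn Φf ?_ ?_ T.finite_toSet
    · rintro S ⟨hSA, v, hv⟩
      refine Finset.mem_coe.2 (Finset.mem_sigma.2
        ⟨Finset.mem_powerset.2 (Finset.subset_univ _), ?_⟩)
      refine Finset.mem_pi.mpr fun j hj => ?_
      have hjw := hwall S j (hex2 S j (hmaxsub _ hj))
      exact (hmemA (j, wall S j)).1 (hSA hjw)
    · intro S₁ hS₁ S₂ hS₂ heq
      have hJ : S₁.image Prod.fst = S₂.image Prod.fst := congrArg Sigma.fst heq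
      have hw : ∀ j ∈ maxI (S₁.image Prod.fst), wall S₁ j = wall S₂ j := by
        intro j hj
        have h2 := (Sigma.mk.inj_iff.1 heq).2
        rw [← hJ] at h2
        have h2' := eq_of_heq h2
        exact congrFun (congrFun h2' j) hj
      exact Finset.Subset.antisymm (hkey S₁ S₂ hS₁ hS₂ hJ hw)
        (hkey S₂ S₁ hS₂ hS₁ hJ.symm (fun j hj => (hw j (by rwa [hJ])).symm))
  -- Step 4 : numeric estimate
  have hnum : T.card ≤ 2 ^ m * (∏ j, Cb j) * n ^ (∑ i ∈ I, α i) := by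
    rw [hT, Finset.card_sigma]
    have hbound : ∀ J ∈ (Finset.univ.powerset : Finset (Finset (Fin m))),
        ((maxI J).pi (fun j => X j n)).card ≤ (∏ j, Cb j) * n ^ (∑ i ∈ I, α i) := by
      intro J hJ
      rw [Finset.card_pi]
      have h1 : ∏ j ∈ maxI J, (X j n).card ≤ ∏ j ∈ maxI J, Cb j * n ^ (α j) := by
        refine Finset.prod_le_prod' fun j hj => ?_
        rw [hXcard]
        exact hCle j n hn
      have h2 : ∏ j ∈ maxI J, (Cb j * n ^ (α j))
          = (∏ j ∈ maxI J, Cb j) * n ^ (∑ j ∈ maxI J, α j) := by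
        rw [Finset.prod_mul_distrib, Finset.prod_pow_eq_pow_sum]
      have h3 : (∏ j ∈ maxI J, Cb j) ≤ ∏ j, Cb j :=
        Finset.prod_le_prod_of_subset_of_one_le' (Finset.subset_univ _)
          (fun j _ _ => hCpos j)
      have h4 : n ^ (∑ j ∈ maxI J, α j) ≤ n ^ (∑ i ∈ I, α i) := by
        refine Nat.pow_le_pow_right hn ?_
        refine hcmp (maxI J) ?_
        rw [hmaxinf J]
        exact hmaxcard J
      calc ∏ j ∈ maxI J, (X j n).card
          ≤ (∏ j ∈ maxI J, Cb j) * n ^ (∑ j ∈ maxI J, α j) := by rw [← h2]; exact h1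
        _ ≤ (∏ j, Cb j) * n ^ (∑ i ∈ I, α i) := Nat.mul_le_mul h3 h4
    calc ∑ J ∈ Finset.univ.powerset, ((maxI J).pi fun j => X j n).card
        ≤ ∑ _J ∈ (Finset.univ.powerset : Finset (Finset (Fin m))),
            (∏ j, Cb j) * n ^ (∑ i ∈ I, α i) := Finset.sum_le_sum hbound
      _ = 2 ^ m * ((∏ j, Cb j) * n ^ (∑ i ∈ I, α i)) := by
          rw [Finset.sum_const, Finset.card_powerset, Finset.card_univ, Fintype.card_fin,
            smul_eq_mul]
      _ = 2 ^ m * (∏ j, Cb j) * n ^ (∑ i ∈ I, α i) := by ring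
  calc Nat.card (ConnectedComponents ↥(Kseq n))
      ≤ (Stmt1Aux.Realized gl tl A ∅).ncard := hstep1
    _ ≤ (Stmt1Aux.Feas gl tl A ∅).ncard := hstep2
    _ ≤ T.card := hstep3
    _ ≤ 2 ^ m * (∏ j, Cb j) * n ^ (∑ i ∈ I, α i) := hnum
end

section
/- For a cut-and-projection method satisfying the standard assumptions, there exists M ∈ ℕ such that for all n ∈ ℕ and all n-regular x, the number of centers of the patch A(x,n), that is #{y ∈ Ã(x,n) : A(x,n) = A(y,n)}, is at most M. Consequently there exists λ > 0 with λ·p_pt(n) ≤ p(n) ≤ p_pt(n) for all n, where p and p_pt are the complexity and pointed complexity functions. -/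
/-!
Write `ℝ^N = E ⊕ F` with projections `π`, `πF`; then `S = K + E` is the set of points whose
`F`-component lies in `K`. A regular point lies in the interior of `S`, so `K` contains a ball
of `F`, and density of `πF ℤ^N` in `F` makes the returns `{l ∈ ℤ^N | w + πF l ∈ K}` relatively
dense in `E`, uniformly in `w ∈ K`.

If `A(x', n) = A(x, n) + t` and `v = π x' - π x - t` is large, use such a return to walk from
`x'` a distance `n - O(1)` in the direction of `v` inside `Ã(x', n)`: the matching point of
`A(x, n)` lies at distance about `‖v‖ + n` from `π x`, too far for a patch of size `n`. So `‖v‖` is bounded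
independently of `n`. A center of `A(x, n)` therefore differs from `x` by a lattice vector with
bounded `E`- and `F`-components, and two pointed patches in one translation class differ by
`π l` for such an `l`. There are finitely many such `l`, which bounds the number of centers and
gives `p_pt ≤ M · p`.
-/

open Pointwise

/-- The 1-norm on `ℝ^N`. -/
noncomputable def oneNorm {N : ℕ} (x : Fin N → ℝ) : ℝ := ∑ i, |x i|

/-- The lattice `ℤ^N` inside `ℝ^N`. -/
def intLattice (N : ℕ) : Set (Fin N → ℝ) :=
  Set.range (fun m : Fin N → ℤ => fun i => ((m i : ℝ)))

/-- The lifted patch of size `n` with seed `x`: `Ã(x,n) = (x + ℤ^N) ∩ B(x,n) ∩ S`. -/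
def liftedPatch {N : ℕ} (S : Set (Fin N → ℝ)) (n : ℕ) (x : Fin N → ℝ) :
    Set (Fin N → ℝ) :=
  {y | y - x ∈ intLattice N ∧ oneNorm (y - x) ≤ n ∧ y ∈ S}

/-- The set of (pointed) patches of size `n` with seed in `K ∩ Reg_n`; since seeds in
`K` project to `0 ∈ E`, pointed patches are identified with their underlying sets. -/
def patchSet {N : ℕ} (π : (Fin N → ℝ) →ₗ[ℝ] (Fin N → ℝ))
    (S K : Set (Fin N → ℝ)) (Reg : ℕ → Set (Fin N → ℝ)) (n : ℕ) :
    Set (Set (Fin N → ℝ)) :=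
  {P | ∃ x ∈ K ∩ Reg n, P = π '' liftedPatch S n x}

section OneNorm

variable {N : ℕ}

lemma oneNorm_zero : oneNorm (0 : Fin N → ℝ) = 0 := by
  simp [oneNorm]

lemma oneNorm_nonneg (v : Fin N → ℝ) : 0 ≤ oneNorm v :=
  Finset.sum_nonneg fun i _ => abs_nonneg (v i)

lemma oneNorm_add_le (v w : Fin N → ℝ) : oneNorm (v + w) ≤ oneNorm v + oneNorm w := by
  simp only [oneNorm, Pi.add_apply, ← Finset.sum_add_distrib]
  exact Finset.sum_le_sum fun i _ => abs_add_le (v i) (w i)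

lemma oneNorm_neg (v : Fin N → ℝ) : oneNorm (-v) = oneNorm v := by
  simp [oneNorm]

lemma oneNorm_sub_comm (v w : Fin N → ℝ) : oneNorm (v - w) = oneNorm (w - v) := by
  rw [← oneNorm_neg, neg_sub]

lemma oneNorm_sub_le (v w : Fin N → ℝ) : oneNorm (v - w) ≤ oneNorm v + oneNorm w := by
  simpa only [sub_eq_add_neg, oneNorm_neg] using oneNorm_add_le v (-w)

lemma oneNorm_smul (r : ℝ) (v : Fin N → ℝ) : oneNorm (r • v) = |r| * oneNorm v := by
  simp [oneNorm, Finset.mul_sum, abs_mul]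

lemma abs_apply_le_oneNorm (v : Fin N → ℝ) (i : Fin N) : |v i| ≤ oneNorm v :=
  Finset.single_le_sum (fun j _ => abs_nonneg (v j)) (Finset.mem_univ i)

lemma oneNorm_le_card_mul_norm (v : Fin N → ℝ) : oneNorm v ≤ N * ‖v‖ := by
  simpa [oneNorm] using Finset.sum_le_card_nsmul Finset.univ (fun i => |v i|) ‖v‖
    fun i _ => (Real.norm_eq_abs (v i)).symm.trans_le (norm_le_pi_norm v i)

lemma continuous_oneNorm : Continuous (oneNorm : (Fin N → ℝ) → ℝ) := by
  unfold oneNorm; fun_prop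

lemma Bornology.IsBounded.exists_oneNorm_sub_le {K : Set (Fin N → ℝ)}
    (hK : Bornology.IsBounded K) : ∃ C, ∀ a ∈ K, ∀ b ∈ K, oneNorm (a - b) ≤ C := by
  obtain ⟨C, hC⟩ := Metric.isBounded_iff.mp hK
  refine ⟨N * C, fun a ha b hb => (oneNorm_le_card_mul_norm _).trans ?_⟩
  rw [← dist_eq_norm]
  exact mul_le_mul_of_nonneg_left (hC ha hb) N.cast_nonneg

end OneNorm

section Lattice

variable {N : ℕ}

lemma zero_mem_intLattice : (0 : Fin N → ℝ) ∈ intLattice N :=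
  ⟨0, by ext; simp⟩

lemma add_mem_intLattice {v w : Fin N → ℝ} (hv : v ∈ intLattice N) (hw : w ∈ intLattice N) :
    v + w ∈ intLattice N := by
  obtain ⟨m, rfl⟩ := hv
  obtain ⟨m', rfl⟩ := hw
  exact ⟨m + m', by ext; simp⟩

lemma exists_mem_intLattice_norm_sub_le_one (v : Fin N → ℝ) :
    ∃ l ∈ intLattice N, ‖l - v‖ ≤ 1 := by
  refine ⟨fun i => (round (v i) : ℝ), ⟨fun i => round (v i), rfl⟩, ?_⟩
  refine (pi_norm_le_iff_of_nonneg zero_le_one).mpr fun i => ?_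
  rw [Pi.sub_apply, Real.norm_eq_abs, abs_sub_comm]
  exact (abs_sub_round (v i)).trans (by norm_num)

def latticeBall (N : ℕ) (B : ℝ) : Set (Fin N → ℝ) :=
  {l | l ∈ intLattice N ∧ oneNorm l ≤ B}

lemma finite_latticeBall (N : ℕ) (B : ℝ) : (latticeBall N B).Finite := by
  refine ((Set.Finite.pi fun _ => Set.finite_Icc (-⌈B⌉) ⌈B⌉).image
    fun (m : Fin N → ℤ) i => (m i : ℝ)).subset ?_
  rintro _ ⟨⟨m, rfl⟩, hm⟩
  refine ⟨m, fun i _ => abs_le.mp ?_, rfl⟩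
  have : |(m i : ℝ)| ≤ ⌈B⌉ := ((abs_apply_le_oneNorm _ i).trans hm).trans (Int.le_ceil B)
  exact_mod_cast this

end Lattice

section Decomposition

variable {R V : Type*} [Ring R] [AddCommGroup V] [Module R V] {E F : Submodule R V}
  {π πF : V →ₗ[R] V}

lemma apply_mem_of_isCompl (hEF : IsCompl E F) (hπE : ∀ x ∈ E, π x = x)
    (hπF : ∀ x ∈ F, π x = 0) (v : V) : π v ∈ E := by
  obtain ⟨e, he, f, hf, rfl⟩ := Submodule.mem_sup.mp (hEF.sup_eq_top ▸ Submodule.mem_top (x := v))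
  rwa [map_add, hπE e he, hπF f hf, add_zero]

lemma apply_add_apply_of_isCompl (hEF : IsCompl E F) (hπE : ∀ x ∈ E, π x = x)
    (hπF : ∀ x ∈ F, π x = 0) (hπFF : ∀ x ∈ F, πF x = x) (hπFE : ∀ x ∈ E, πF x = 0)
    (v : V) : π v + πF v = v := by
  obtain ⟨e, he, f, hf, rfl⟩ := Submodule.mem_sup.mp (hEF.sup_eq_top ▸ Submodule.mem_top (x := v))
  simp [hπE e he, hπF f hf, hπFF f hf, hπFE e he]

lemma mem_add_submodule_iff {K : Set V} (hKF : K ⊆ F) (hπ : ∀ v, π v ∈ E)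
    (hπFF : ∀ x ∈ F, πF x = x) (hπFE : ∀ x ∈ E, πF x = 0) (hdec : ∀ v, π v + πF v = v)
    (z : V) : z ∈ K + (E : Set V) ↔ πF z ∈ K := by
  constructor
  · rintro ⟨k, hk, e, he, rfl⟩
    rwa [map_add, hπFF k (hKF hk), hπFE e he, add_zero]
  · exact fun h => ⟨πF z, h, π z, hπ z, by simp only [add_comm (πF z), hdec]⟩

end Decomposition

lemma exists_ball_inter_subset_of_mem_interior {V : Type*} [NormedAddCommGroup V]
    [Module ℝ V] {F : Submodule ℝ V} {πF : V →ₗ[ℝ] V} {S K : Set V}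
    (hSK : ∀ z, z ∈ S ↔ πF z ∈ K) (hπF : ∀ v, πF v ∈ F) (hπFF : ∀ x ∈ F, πF x = x)
    {x : V} (hx : x ∈ interior S) : ∃ ε > 0, Metric.ball (πF x) ε ∩ F ⊆ K := by
  obtain ⟨ε, hε, hball⟩ := Metric.isOpen_iff.mp isOpen_interior x hx
  refine ⟨ε, hε, fun f ⟨hf, hfF⟩ => ?_⟩
  have hxf : x + (f - πF x) ∈ S :=
    interior_subset (hball (by simpa [dist_eq_norm] using hf))
  rwa [hSK, map_add, map_sub, hπFF f hfF, hπFF _ (hπF x), add_sub_cancel] at hxf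

section CutAndProject

variable {N : ℕ} {E F : Submodule ℝ (Fin N → ℝ)} {π πF : (Fin N → ℝ) →ₗ[ℝ] (Fin N → ℝ)}
  {S K : Set (Fin N → ℝ)} {C R : ℝ} {n : ℕ}

/- The window contains a ball of `F`, so it suffices to approximate, within that radius, the
points of a fixed compact subset of `F` by projections `πF l` of finitely many lattice
points; rounding `u` to the lattice makes the required approximation uniform in `u`. -/
theorem exists_forall_exists_intLattice_add_mem (hπE : ∀ x ∈ E, π x = x)
    (hπFE : ∀ x ∈ E, πF x = 0) (hπF : ∀ v, πF v ∈ F) (hK : IsCompact K) (hKF : K ⊆ F)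
    (hdense : (F : Set (Fin N → ℝ)) ⊆ closure (πF '' intLattice N)) {c : Fin N → ℝ}
    (hc : c ∈ F) {ε : ℝ} (hε : 0 < ε) (hball : Metric.ball c ε ∩ F ⊆ K) :
    ∃ R, ∀ w ∈ K, ∀ u ∈ E, ∃ l ∈ intLattice N, w + πF l ∈ K ∧ oneNorm (π l - u) ≤ R := by
  have hπcont := π.continuous_of_finiteDimensional
  have hπFcont := πF.continuous_of_finiteDimensional
  obtain ⟨R₁, hR₁⟩ := (isCompact_closedBall (0 : Fin N → ℝ) 1).bddAbove_image
    (continuous_oneNorm.comp hπcont).continuousOn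
  set T := (fun p : (Fin N → ℝ) × (Fin N → ℝ) => c - p.1 - πF p.2) ''
    (K ×ˢ Metric.closedBall 0 1)
  have hT : IsCompact T := (hK.prod (isCompact_closedBall 0 1)).image (by fun_prop)
  have hTcover : T ⊆ ⋃ l ∈ intLattice N, Metric.ball (πF l) ε := by
    rintro _ ⟨⟨w, d⟩, ⟨hw, -⟩, rfl⟩
    obtain ⟨_, ⟨l, hl, rfl⟩, hdist⟩ := Metric.mem_closure_iff.mp
      (hdense (F.sub_mem (F.sub_mem hc (hKF hw)) (hπF d))) ε hε
    exact Set.mem_biUnion hl (Metric.mem_ball.mpr hdist)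
  obtain ⟨s, hsL, hs, hTs⟩ := hT.elim_finite_subcover_image (fun _ _ => Metric.isOpen_ball)
    hTcover
  obtain ⟨R₂, hR₂⟩ := (hs.image fun l => oneNorm (π l)).bddAbove
  refine ⟨R₁ + R₂, fun w hw u hu => ?_⟩
  obtain ⟨l₀, hl₀, hl₀u⟩ := exists_mem_intLattice_norm_sub_le_one u
  obtain ⟨g, hg, hgT⟩ := Set.mem_iUnion₂.mp
    (hTs ⟨(w, l₀ - u), ⟨hw, mem_closedBall_zero_iff.mpr hl₀u⟩, rfl⟩)
  refine ⟨l₀ + g, add_mem_intLattice hl₀ (hsL hg), hball ⟨?_, F.add_mem (hKF hw) (hπF _)⟩, ?_⟩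
  · have hshift : w + πF (l₀ + g) - c = πF g - (c - w - πF (l₀ - u)) := by
      rw [map_sub, hπFE u hu, map_add]; abel
    rw [Metric.mem_ball, dist_eq_norm] at hgT ⊢
    rwa [hshift, norm_sub_rev]
  · have hsplit : π (l₀ + g) - u = π (l₀ - u) + π g := by
      rw [map_add, map_sub, hπE u hu]; abel
    rw [hsplit]
    exact (oneNorm_add_le _ _).trans (add_le_add (hR₁ ⟨_, mem_closedBall_zero_iff.mpr hl₀u, rfl⟩)
      (hR₂ ⟨g, hg, rfl⟩))

lemma self_mem_liftedPatch {x : Fin N → ℝ} (hx : x ∈ S) : x ∈ liftedPatch S n x :=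
  ⟨by rw [sub_self]; exact zero_mem_intLattice, by rw [sub_self, oneNorm_zero]; positivity, hx⟩

lemma oneNorm_le_oneNorm_apply_add (hdec : ∀ v, π v + πF v = v) (v : Fin N → ℝ) :
    oneNorm v ≤ oneNorm (π v) + oneNorm (πF v) := by
  conv_lhs => rw [← hdec v]
  exact oneNorm_add_le _ _

lemma oneNorm_apply_sub_le_of_mem_liftedPatch (hSK : ∀ z, z ∈ S ↔ πF z ∈ K)
    (hC : ∀ a ∈ K, ∀ b ∈ K, oneNorm (a - b) ≤ C) {x y : Fin N → ℝ} (hx : x ∈ S)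
    (hy : y ∈ liftedPatch S n x) : oneNorm (πF (y - x)) ≤ C := by
  rw [map_sub]
  exact hC _ ((hSK y).mp hy.2.2) _ ((hSK x).mp hx)

lemma oneNorm_apply_sub_apply_le_of_mem_liftedPatch (hdec : ∀ v, π v + πF v = v)
    (hSK : ∀ z, z ∈ S ↔ πF z ∈ K) (hC : ∀ a ∈ K, ∀ b ∈ K, oneNorm (a - b) ≤ C)
    {x q : Fin N → ℝ} (hx : x ∈ S) (hq : q ∈ liftedPatch S n x) :
    oneNorm (π q - π x) ≤ n + C := by
  have hsplit : π q - π x = (q - x) - πF (q - x) := by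
    rw [map_sub]; linear_combination hdec q - hdec x
  rw [hsplit]
  exact (oneNorm_sub_le _ _).trans
    (add_le_add hq.2.1 (oneNorm_apply_sub_le_of_mem_liftedPatch hSK hC hx hq))

lemma mem_latticeBall_of_oneNorm_apply_le (hdec : ∀ v, π v + πF v = v) {ρ : ℝ}
    {l : Fin N → ℝ} (hl : l ∈ intLattice N) (hπl : oneNorm (π l) ≤ ρ)
    (hπFl : oneNorm (πF l) ≤ C) : l ∈ latticeBall N (ρ + C) :=
  ⟨hl, (oneNorm_le_oneNorm_apply_add hdec l).trans (add_le_add hπl hπFl)⟩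

lemma exists_add_mem_liftedPatch (hdec : ∀ v, π v + πF v = v) (hSK : ∀ z, z ∈ S ↔ πF z ∈ K)
    (hC : ∀ a ∈ K, ∀ b ∈ K, oneNorm (a - b) ≤ C)
    (hR : ∀ w ∈ K, ∀ u ∈ E, ∃ l ∈ intLattice N, w + πF l ∈ K ∧ oneNorm (π l - u) ≤ R)
    {x u : Fin N → ℝ} (hx : x ∈ S) (hu : u ∈ E) (hn : oneNorm u + R + C ≤ n) :
    ∃ l, x + l ∈ liftedPatch S n x ∧ oneNorm (π l - u) ≤ R := by
  obtain ⟨l, hl, hlK, hlu⟩ := hR _ ((hSK x).mp hx) u hu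
  have hxl : x + l ∈ S := (hSK _).mpr (by rwa [map_add])
  have hπFl : oneNorm (πF l) ≤ C := by
    simpa using hC _ hlK _ ((hSK x).mp hx)
  have hπl : oneNorm (π l) ≤ R + oneNorm u := by
    have := oneNorm_add_le (π l - u) u
    rw [sub_add_cancel] at this
    linarith
  refine ⟨l, ⟨by rwa [add_sub_cancel_left], ?_, hxl⟩, hlu⟩
  rw [add_sub_cancel_left]
  linarith [oneNorm_le_oneNorm_apply_add hdec l]

theorem oneNorm_sub_sub_le_of_image_liftedPatch_eq (hπ : ∀ v, π v ∈ E)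
    (hdec : ∀ v, π v + πF v = v) (hSK : ∀ z, z ∈ S ↔ πF z ∈ K)
    (hC : ∀ a ∈ K, ∀ b ∈ K, oneNorm (a - b) ≤ C)
    (hR : ∀ w ∈ K, ∀ u ∈ E, ∃ l ∈ intLattice N, w + πF l ∈ K ∧ oneNorm (π l - u) ≤ R)
    {x x' t : Fin N → ℝ} (hx : x ∈ S) (hx' : x' ∈ S) (ht : t ∈ E)
    (h : π '' liftedPatch S n x' = (· + t) '' (π '' liftedPatch S n x)) :
    oneNorm (π x' - π x - t) ≤ 2 * R + 2 * C := by
  have hret : ∀ l, x' + l ∈ liftedPatch S n x' → oneNorm (π x' - π x - t + π l) ≤ n + C := by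
    intro l hl
    obtain ⟨_, ⟨q, hq, rfl⟩, hqt⟩ : π (x' + l) ∈ (· + t) '' (π '' liftedPatch S n x) :=
      h ▸ ⟨_, hl, rfl⟩
    have hq' : π x' - π x - t + π l = π q - π x := by
      rw [map_add] at hqt; linear_combination -hqt
    exact hq' ▸ oneNorm_apply_sub_apply_le_of_mem_liftedPatch hdec hSK hC hx hq
  have hC0 : 0 ≤ C := by
    simpa [oneNorm_zero] using hC _ ((hSK x).mp hx) _ ((hSK x).mp hx)
  have hR0 : 0 ≤ R := by
    obtain ⟨l, -, -, hl⟩ := hR _ ((hSK x).mp hx) 0 E.zero_mem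
    exact (oneNorm_nonneg _).trans hl
  set v := π x' - π x - t
  rcases lt_or_ge (n : ℝ) (R + C) with hn | hn
  · have := hret 0 (by simpa using self_mem_liftedPatch (n := n) hx')
    rw [map_zero, add_zero] at this
    linarith
  rcases (oneNorm_nonneg v).eq_or_lt with hv | hv
  · rw [← hv]; positivity
  set s := (n - R - C) / oneNorm v
  have hs : 0 ≤ s := div_nonneg (by linarith) hv.le
  have hsv : oneNorm (s • v) = n - R - C := by
    rw [oneNorm_smul, abs_of_nonneg hs, div_mul_cancel₀ _ hv.ne']
  have hvE : v ∈ E := sub_mem (sub_mem (hπ x') (hπ x)) ht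
  obtain ⟨l, hl, hlu⟩ := exists_add_mem_liftedPatch hdec hSK hC hR hx' (E.smul_mem s hvE)
    (by linarith)
  have hfar : oneNorm (v + s • v) = oneNorm v + oneNorm (s • v) := by
    rw [show v + s • v = (1 + s) • v by rw [add_smul, one_smul], oneNorm_smul, oneNorm_smul,
      abs_of_nonneg (by linarith), abs_of_nonneg hs]
    ring
  have htri : oneNorm (v + s • v) ≤ oneNorm (v + π l) + oneNorm (s • v - π l) := by
    simpa using oneNorm_add_le (v + π l) (s • v - π l)
  rw [oneNorm_sub_comm] at hlu
  linarith [hret l hl]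

theorem exists_oneNorm_sub_sub_le_of_mem_interior (hπ : ∀ v, π v ∈ E)
    (hπE : ∀ x ∈ E, π x = x) (hπFE : ∀ x ∈ E, πF x = 0) (hπF : ∀ v, πF v ∈ F)
    (hπFF : ∀ x ∈ F, πF x = x) (hdec : ∀ v, π v + πF v = v) (hSK : ∀ z, z ∈ S ↔ πF z ∈ K)
    (hK : IsCompact K) (hKF : K ⊆ F)
    (hdense : (F : Set (Fin N → ℝ)) ⊆ closure (πF '' intLattice N))
    (hC : ∀ a ∈ K, ∀ b ∈ K, oneNorm (a - b) ≤ C) :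
    ∃ ρ, ∀ n : ℕ, ∀ x ∈ interior S, ∀ x' ∈ S, ∀ t ∈ E,
      π '' liftedPatch S n x' = (· + t) '' (π '' liftedPatch S n x) →
      oneNorm (π x' - π x - t) ≤ ρ := by
  rcases (interior S).eq_empty_or_nonempty with hS | ⟨x₀, hx₀⟩
  · exact ⟨0, fun n x hx => by simp [hS] at hx⟩
  obtain ⟨ε, hε, hball⟩ := exists_ball_inter_subset_of_mem_interior hSK hπF hπFF hx₀
  obtain ⟨R, hR⟩ := exists_forall_exists_intLattice_add_mem hπE hπFE hπF hK hKF hdense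
    (hπF x₀) hε hball
  exact ⟨2 * R + 2 * C, fun n x hx x' hx' t ht h =>
    oneNorm_sub_sub_le_of_image_liftedPatch_eq hπ hdec hSK hC hR (interior_subset hx) hx' ht h⟩

theorem card_centers_le (hdec : ∀ v, π v + πF v = v) (hSK : ∀ z, z ∈ S ↔ πF z ∈ K)
    (hC : ∀ a ∈ K, ∀ b ∈ K, oneNorm (a - b) ≤ C) {ρ : ℝ} {x : Fin N → ℝ} (hx : x ∈ S)
    (hρ : ∀ x' ∈ S, ∀ t ∈ E, π '' liftedPatch S n x' = (· + t) '' (π '' liftedPatch S n x) →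
      oneNorm (π x' - π x - t) ≤ ρ) :
    Nat.card {y : Fin N → ℝ // y ∈ liftedPatch S n x ∧
      π '' liftedPatch S n y = π '' liftedPatch S n x} ≤ Nat.card (latticeBall N (ρ + C)) := by
  have := (finite_latticeBall N (ρ + C)).to_subtype
  refine Nat.card_le_card_of_injective (fun y => ⟨y.1 - x, ?_⟩)
    fun y y' h => Subtype.ext (sub_left_injective (congrArg Subtype.val h))
  obtain ⟨y, hy, hyx⟩ := y
  refine mem_latticeBall_of_oneNorm_apply_le hdec hy.1 ?_
    (oneNorm_apply_sub_le_of_mem_liftedPatch hSK hC hx hy)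
  simpa using hρ y hy.2.2 0 E.zero_mem (by simpa using hyx)

lemma exists_mem_latticeBall_apply_eq (hdec : ∀ v, π v + πF v = v)
    (hSK : ∀ z, z ∈ S ↔ πF z ∈ K) (hC : ∀ a ∈ K, ∀ b ∈ K, oneNorm (a - b) ≤ C) {ρ : ℝ}
    {x x' t : Fin N → ℝ} (hx : x ∈ S) (hx' : x' ∈ S) (hπx : π x = 0) (hπx' : π x' = 0)
    (h : π '' liftedPatch S n x' = (· + t) '' (π '' liftedPatch S n x)) (ht : oneNorm t ≤ ρ) :
    ∃ l ∈ latticeBall N (ρ + C), π l = t := by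
  obtain ⟨y, hy, hyt⟩ : t ∈ π '' liftedPatch S n x' :=
    h ▸ ⟨π x, ⟨x, self_mem_liftedPatch hx, rfl⟩, by simp [hπx]⟩
  have hπl : π (y - x') = t := by rw [map_sub, hπx', sub_zero, hyt]
  exact ⟨y - x', mem_latticeBall_of_oneNorm_apply_le hdec hy.1 (hπl ▸ ht)
    (oneNorm_apply_sub_le_of_mem_liftedPatch hSK hC hx' hy), hπl⟩

end CutAndProject

theorem Nat.card_le_card_quot_mul_card {α β γ : Type*} [Finite α] [Finite β]
    {r : α → α → Prop} (hr : Equivalence r) {ι : α → γ} (hι : Function.Injective ι)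
    (g : α → β → γ) (hg : ∀ a b, r a b → ∃ c, ι b = g a c) :
    Nat.card α ≤ Nat.card (Quot r) * Nat.card β := by
  have : Finite (Quot r) := Finite.of_surjective _ Quot.mk_surjective
  choose c hc using fun b =>
    hg _ b (hr.eqvGen_iff.mp (Quot.eqvGen_exact (Quot.out_eq (Quot.mk r b))))
  rw [← Nat.card_prod]
  refine Nat.card_le_card_of_injective (fun b => (Quot.mk r b, c b)) fun b b' h => hι ?_
  obtain ⟨hq, hcb⟩ := Prod.mk.inj h
  rw [hc b, hc b', hq, hcb]

theorem equivalence_exists_image_add_eq {V : Type*} [AddCommGroup V] (E : AddSubgroup V) :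
    Equivalence fun P Q : Set V => ∃ t ∈ E, (· + t) '' P = Q where
  refl P := ⟨0, E.zero_mem, by simp⟩
  symm := fun ⟨t, ht, h⟩ => ⟨-t, E.neg_mem ht, by rw [← h, Set.image_image]; simp⟩
  trans := fun ⟨t, ht, h⟩ ⟨s, hs, h'⟩ =>
    ⟨t + s, E.add_mem ht hs, by rw [← h', ← h, Set.image_image]; simp [add_assoc]⟩

lemma regular_subset_interior {N : ℕ} (S : Set (Fin N → ℝ)) (n : ℕ) :
    {x ∈ S | ¬ ∃ l ∈ intLattice N, oneNorm l ≤ n ∧ x + l ∈ frontier S} ⊆ interior S := by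
  rintro x ⟨hxS, hx⟩
  by_contra hint
  exact hx ⟨0, zero_mem_intLattice, by rw [oneNorm_zero]; positivity,
    by rw [add_zero]; exact ⟨subset_closure hxS, hint⟩⟩

section Patches

variable {N : ℕ} {E F : Submodule ℝ (Fin N → ℝ)} {π πF : (Fin N → ℝ) →ₗ[ℝ] (Fin N → ℝ)}
  {S K : Set (Fin N → ℝ)} {C : ℝ}

theorem finite_patchSet (hKF : K ⊆ F) (hπF : ∀ x ∈ F, π x = 0) (Reg : ℕ → Set (Fin N → ℝ))
    (n : ℕ) : (patchSet π S K Reg n).Finite := by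
  refine ((finite_latticeBall N n).image π).finite_subsets.subset ?_
  rintro _ ⟨x, ⟨hxK, -⟩, rfl⟩ _ ⟨y, ⟨hyx, hyn, -⟩, rfl⟩
  exact ⟨y - x, ⟨hyx, hyn⟩, by rw [map_sub, hπF x (hKF hxK), sub_zero]⟩

theorem card_patchSet_le (hKF : K ⊆ F) (hπF : ∀ x ∈ F, π x = 0) (hdec : ∀ v, π v + πF v = v)
    (hSK : ∀ z, z ∈ S ↔ πF z ∈ K) (hC : ∀ a ∈ K, ∀ b ∈ K, oneNorm (a - b) ≤ C)
    {Reg : ℕ → Set (Fin N → ℝ)} {n : ℕ} (hRegS : Reg n ⊆ S) {ρ : ℝ}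
    (hρ : ∀ x ∈ Reg n, ∀ x' ∈ S, ∀ t ∈ E,
      π '' liftedPatch S n x' = (· + t) '' (π '' liftedPatch S n x) →
      oneNorm (π x' - π x - t) ≤ ρ) :
    Nat.card (patchSet π S K Reg n) ≤ Nat.card (Quot fun P Q : patchSet π S K Reg n =>
      ∃ t ∈ E, ((· + t) '' (P : Set (Fin N → ℝ))) = (Q : Set (Fin N → ℝ))) *
      Nat.card (latticeBall N (ρ + C)) := by
  have := (finite_patchSet (S := S) hKF hπF Reg n).to_subtype
  have := (finite_latticeBall N (ρ + C)).to_subtype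
  refine Nat.card_le_card_quot_mul_card
    ((equivalence_exists_image_add_eq E.toAddSubgroup).comap Subtype.val)
    Subtype.val_injective (fun P l => (· + π l) '' (P : Set (Fin N → ℝ))) ?_
  rintro ⟨_, x, ⟨hxK, hxR⟩, rfl⟩ ⟨_, x', ⟨hx'K, hx'R⟩, rfl⟩ ⟨t, ht, h⟩
  have hπx := hπF x (hKF hxK)
  have hπx' := hπF x' (hKF hx'K)
  have htρ : oneNorm t ≤ ρ := by
    simpa [hπx, hπx', oneNorm_neg] using hρ x hxR x' (hRegS hx'R) t ht h.symm
  obtain ⟨l, hl, rfl⟩ := exists_mem_latticeBall_apply_eq hdec hSK hC (hRegS hxR) (hRegS hx'R)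
    hπx hπx' h.symm htρ
  exact ⟨⟨l, hl⟩, h.symm⟩

end Patches

theorem stmt16_general (N : ℕ) (E F : Submodule ℝ (Fin N → ℝ)) (hEF : IsCompl E F)
    (K : Set (Fin N → ℝ)) (hKF : K ⊆ (F : Set (Fin N → ℝ)))
    (hKcompact : IsCompact K)
    (π πF : (Fin N → ℝ) →ₗ[ℝ] (Fin N → ℝ))
    (hπE : ∀ x ∈ E, π x = x) (hπF : ∀ x ∈ F, π x = 0)
    (hπFF : ∀ x ∈ F, πF x = x) (hπFE : ∀ x ∈ E, πF x = 0)
    (hdense : closure (πF '' intLattice N) = (F : Set (Fin N → ℝ)))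
    (S : Set (Fin N → ℝ)) (hS : S = K + (E : Set (Fin N → ℝ)))
    (Reg : ℕ → Set (Fin N → ℝ))
    (hReg : ∀ n, Reg n =
      {x ∈ S | ¬ ∃ l ∈ intLattice N, oneNorm l ≤ n ∧ x + l ∈ frontier S})
    (ppt p : ℕ → ℕ)
    (hppt : ∀ n, ppt n = Nat.card (patchSet π S K Reg n))
    (hp : ∀ n, p n = Nat.card (Quot (fun P Q : patchSet π S K Reg n =>
      ∃ t ∈ E, ((· + t) '' (P : Set (Fin N → ℝ))) = (Q : Set (Fin N → ℝ))))) :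
    (∃ M : ℕ, ∀ n : ℕ, ∀ x ∈ Reg n,
      Nat.card {y : Fin N → ℝ // y ∈ liftedPatch S n x ∧
        π '' liftedPatch S n y = π '' liftedPatch S n x} ≤ M) ∧
    (∃ lam : ℝ, 0 < lam ∧ ∀ n : ℕ,
      lam * (ppt n : ℝ) ≤ (p n : ℝ) ∧ (p n : ℝ) ≤ (ppt n : ℝ)) := by
  have hπ : ∀ v, π v ∈ E := apply_mem_of_isCompl hEF hπE hπF
  have hπF' : ∀ v, πF v ∈ F := apply_mem_of_isCompl hEF.symm hπFF hπFE
  have hdec : ∀ v, π v + πF v = v := apply_add_apply_of_isCompl hEF hπE hπF hπFF hπFE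
  have hSK : ∀ z, z ∈ S ↔ πF z ∈ K := hS ▸ mem_add_submodule_iff hKF hπ hπFF hπFE hdec
  have hRegInt : ∀ n, Reg n ⊆ interior S := fun n => hReg n ▸ regular_subset_interior S n
  have hRegS : ∀ n, Reg n ⊆ S := fun n => (hRegInt n).trans interior_subset
  obtain ⟨C, hC⟩ := hKcompact.isBounded.exists_oneNorm_sub_le
  obtain ⟨ρ, hρ⟩ := exists_oneNorm_sub_sub_le_of_mem_interior hπ hπE hπFE hπF' hπFF hdec hSK
    hKcompact hKF hdense.ge hC
  set M := Nat.card (latticeBall N (ρ + C))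
  refine ⟨⟨M, fun n x hx => card_centers_le hdec hSK hC (hRegS n hx) (hρ n x (hRegInt n hx))⟩,
    ((M : ℝ) + 1)⁻¹, by positivity, fun n => ⟨?_, ?_⟩⟩
  · have hle := card_patchSet_le hKF hπF hdec hSK hC (hRegS n)
      fun x hx => hρ n x (hRegInt n hx)
    rw [hppt, hp, inv_mul_le_iff₀ (by positivity)]
    exact_mod_cast hle.trans (by rw [mul_comm]; exact Nat.mul_le_mul_right _ M.le_succ)
  · have := (finite_patchSet (S := S) hKF hπF Reg n).to_subtype
    rw [hppt, hp]
    exact_mod_cast Nat.card_le_card_of_surjective _ Quot.mk_surjective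

/-- A patch of size `n` has a bounded number of centers, and consequently the
complexity `p` and pointed complexity `p_pt` satisfy `λ·p_pt(n) ≤ p(n) ≤ p_pt(n)`. -/
theorem stmt16 (N : ℕ) (E F : Submodule ℝ (Fin N → ℝ)) (hEF : IsCompl E F)
    (K : Set (Fin N → ℝ)) (hKF : K ⊆ (F : Set (Fin N → ℝ)))
    (hKcompact : IsCompact K) (hKconv : Convex ℝ K)
    (π πF : (Fin N → ℝ) →ₗ[ℝ] (Fin N → ℝ))
    (hπE : ∀ x ∈ E, π x = x) (hπF : ∀ x ∈ F, π x = 0)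
    (hπFF : ∀ x ∈ F, πF x = x) (hπFE : ∀ x ∈ E, πF x = 0)
    (hπinj : Set.InjOn π (intLattice N))
    (hdense : closure (πF '' intLattice N) = (F : Set (Fin N → ℝ)))
    (S : Set (Fin N → ℝ)) (hS : S = K + (E : Set (Fin N → ℝ)))
    (Reg : ℕ → Set (Fin N → ℝ))
    (hReg : ∀ n, Reg n =
      {x ∈ S | ¬ ∃ l ∈ intLattice N, oneNorm l ≤ n ∧ x + l ∈ frontier S})
    (ppt p : ℕ → ℕ)
    (hppt : ∀ n, ppt n = Nat.card (patchSet π S K Reg n))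
    (hp : ∀ n, p n = Nat.card (Quot (fun P Q : patchSet π S K Reg n =>
      ∃ t ∈ E, ((· + t) '' (P : Set (Fin N → ℝ))) = (Q : Set (Fin N → ℝ))))) :
    (∃ M : ℕ, ∀ n : ℕ, ∀ x ∈ Reg n,
      Nat.card {y : Fin N → ℝ // y ∈ liftedPatch S n x ∧
        π '' liftedPatch S n y = π '' liftedPatch S n x} ≤ M) ∧
    (∃ lam : ℝ, 0 < lam ∧ ∀ n : ℕ,
      lam * (ppt n : ℝ) ≤ (p n : ℝ) ∧ (p n : ℝ) ≤ (ppt n : ℝ)) :=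
  stmt16_general N E F hEF K hKF hKcompact π πF hπE hπF hπFF hπFE hdense S hS Reg hReg ppt p hppt hp
end

section
/- With notation as in Theorem 1 (α = Σ_{i∈I} α_i, α_i = rk(Γ) - a_i - 1, |I| = N-d, ∩_{i∈I} H_i = {0}, a_J = rk Stab_Γ(∩_{j∈J} H_j)), the inequality a_J + a_{J'} - a_{J∪J'} ≤ rk(Γ) iterated over I yields Σ_{i∈I} a_i ≤ (N-d-1)·rk(Γ) + a_I with a_I = 0, and therefore α ≥ d + rk(Γ) - N. -/
/-! For subgroups `A, B` of `Γ`, `rk A + rk B = rk (A + B) + rk (A ∩ B) ≤ rk Γ + rk (A ∩ B)`.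
Inducting over `I` gives `Σ_{i ∈ I} rk G_i + rk Γ ≤ |I| · rk Γ + rk (⋂_{i ∈ I} G_i)`, and the last
rank vanishes by hypothesis. -/

open Module

universe u

namespace Submodule

variable {R : Type*} {M : Type u} [Ring R] [StrongRankCondition R] [HasRankNullity.{u} R]
  [AddCommGroup M] [Module R M] [IsNoetherian R M]

theorem finrank_add_finrank_le_finrank_add_finrank_inf (s t : Submodule R M) :
    finrank R s + finrank R t ≤ finrank R M + finrank R ↥(s ⊓ t) := by
  have hrank : Module.rank R s + Module.rank R t ≤ Module.rank R M + Module.rank R ↥(s ⊓ t) :=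
    rank_sup_add_rank_inf_eq s t ▸ add_le_add_left (rank_le _) _
  rw [← finrank_eq_rank, ← finrank_eq_rank, ← finrank_eq_rank, ← finrank_eq_rank] at hrank
  exact_mod_cast hrank

theorem sum_finrank_add_finrank_le_card_mul_finrank_add_finrank_iInf {ι : Type*}
    (p : ι → Submodule R M) (s : Finset ι) :
    ∑ i ∈ s, finrank R (p i) + finrank R M ≤
      s.card * finrank R M + finrank R ↥(⨅ i ∈ s, p i) := by
  classical
  induction s using Finset.induction_on with
  | empty => rw [show (⨅ i ∈ (∅ : Finset ι), p i) = ⊤ by simp, finrank_top]; simp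
  | @insert a s ha ih =>
    have key := finrank_add_finrank_le_finrank_add_finrank_inf (p a) (⨅ i ∈ s, p i)
    rw [Finset.sum_insert ha, Finset.card_insert_of_notMem ha, Finset.iInf_insert]
    nlinarith

end Submodule

theorem stmt19_general (N d : ℕ) (hdN : d < N)
    (Γ : Type*) [AddCommGroup Γ] [Module.Finite ℤ Γ]
    (m : ℕ) (G : Fin m → AddSubgroup Γ)
    (I : Finset (Fin m)) (hIcard : I.card = N - d)
    (hAI : Module.finrank ℤ ↥(⨅ i ∈ I, G i) = 0) :
    (∑ i ∈ I, (Module.finrank ℤ ↥(G i) : ℤ)) ≤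
      ((N : ℤ) - d - 1) * (Module.finrank ℤ Γ : ℤ) ∧
    (∑ i ∈ I, ((Module.finrank ℤ Γ : ℤ) - (Module.finrank ℤ ↥(G i) : ℤ) - 1)) ≥
      (d : ℤ) + (Module.finrank ℤ Γ : ℤ) - N := by
  have hinf : (⨅ i ∈ I, G i).toIntSubmodule = ⨅ i ∈ I, (G i).toIntSubmodule := by simp
  have key := Submodule.sum_finrank_add_finrank_le_card_mul_finrank_add_finrank_iInf
    (fun i ↦ (G i).toIntSubmodule) I
  rw [← hinf] at key
  change ∑ i ∈ I, finrank ℤ ↥(G i) + finrank ℤ Γ ≤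
    I.card * finrank ℤ Γ + finrank ℤ ↥(⨅ i ∈ I, G i) at key
  have hcard : ((N - d : ℕ) : ℤ) = N - d := Nat.cast_sub hdN.le
  rw [hIcard, hAI] at key
  zify at key
  rw [hcard] at key
  constructor
  · linarith
  · simp only [Finset.sum_sub_distrib, Finset.sum_const, nsmul_eq_mul, hIcard, hcard]
    linarith

/-- Iterating the subadditivity `a_J + a_{J'} ≤ rk(Γ) + a_{J∪J'}` of stabilizer ranks
over a transverse family `I` of `N-d` hyperplanes with `a_I = 0` yields
`Σ_{i∈I} a_i ≤ (N-d-1)·rk(Γ)`, whence `α = Σ_{i∈I}(rk(Γ) - a_i - 1) ≥ d + rk(Γ) - N`. -/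
theorem stmt19 (N d : ℕ) (hdN : d < N)
    (Γ : Type*) [AddCommGroup Γ] [Module.Free ℤ Γ] [Module.Finite ℤ Γ]
    (m : ℕ) (G : Fin m → AddSubgroup Γ)
    (I : Finset (Fin m)) (hIcard : I.card = N - d)
    (hAI : Module.finrank ℤ ↥(⨅ i ∈ I, G i) = 0) :
    (∑ i ∈ I, (Module.finrank ℤ ↥(G i) : ℤ)) ≤
      ((N : ℤ) - d - 1) * (Module.finrank ℤ Γ : ℤ) ∧
    (∑ i ∈ I, ((Module.finrank ℤ Γ : ℤ) - (Module.finrank ℤ ↥(G i) : ℤ) - 1)) ≥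
      (d : ℤ) + (Module.finrank ℤ Γ : ℤ) - N :=
  stmt19_general N d hdN Γ m G I hIcard hAI
end
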